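/- Let Q ∈ ℚ⟦X⟧ be the formal power series with zero constant coefficient satisfying Q·(1 − Q)³ = X (so 1 − Q has constant coefficient 1 and is invertible), and let z := Q·(1 − 2Q)²·(1 − Q)^{−3} ∈ ℚ⟦X⟧, a series with zero constant coefficient. Then X·z = (Q − 2Q²)². Moreover, if R ∈ ℚ⟦T⟧ is the formal power series with zero constant coefficient satisfying R·(1 − R)² = T, then the substitution of z into R equals Q·(1 − Q)^{−1} in ℚ⟦X⟧. -/

import Mathlib

/-!
Substituting `z` into the defining equation `R (1 - R)² = T` shows that `W := R(z)` solves
`W (1 - W)² = z`, and a direct computation shows that `S := Q / (1 - Q)` solves the same equation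
(note `1 - S = (1 - 2Q) / (1 - Q)`). Both have zero constant term, and on such series the map
`w ↦ w (1 - w)²` is injective, so `W = S`. The truncated substitution `substInto` agrees with
Mathlib's `PowerSeries.subst`, which supplies the ring homomorphism property.
-/

open PowerSeries

/-- Substitution of the power series `f` (assumed to have zero constant coefficient)
into the power series `g`. -/
noncomputable def substInto (f g : PowerSeries ℚ) : PowerSeries ℚ :=
  PowerSeries.mk fun n =>
    PowerSeries.coeff n (Polynomial.aeval f (PowerSeries.trunc (n + 1) g))

namespace PowerSeries

variable {R : Type*}

theorem coeff_pow_eq_zero_of_lt [CommSemiring R] {f : R⟦X⟧} (hf : constantCoeff f = 0)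
    {n k : ℕ} (h : n < k) : coeff n (f ^ k) = 0 :=
  X_pow_dvd_iff.mp (pow_dvd_pow_of_dvd (X_dvd_iff.mpr hf) k) n h

/-- The difference quotient `1 - 2 (a + b) + a² + a b + b²` of `w ↦ w (1 - w)²` is a unit. -/
theorem eq_of_mul_one_sub_sq_eq [CommRing R] {a b : R⟦X⟧} (ha : constantCoeff a = 0)
    (hb : constantCoeff b = 0) (h : a * (1 - a) ^ 2 = b * (1 - b) ^ 2) : a = b := by
  have hunit : IsUnit (1 - 2 * (a + b) + (a ^ 2 + a * b + b ^ 2)) :=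
    isUnit_iff_constantCoeff.mpr (by simp [ha, hb])
  have hfactor : (a - b) * (1 - 2 * (a + b) + (a ^ 2 + a * b + b ^ 2)) = 0 := by
    linear_combination h
  exact sub_eq_zero.mp (hunit.mul_left_eq_zero.mp hfactor)

theorem subst_mul_one_sub_subst_sq [CommRing R] {a g : R⟦X⟧} (ha : constantCoeff a = 0)
    (hg : g * (1 - g) ^ 2 = X) : g.subst a * (1 - g.subst a) ^ 2 = a := by
  have ha' := HasSubst.of_constantCoeff_zero' ha
  have h := congrArg (substAlgHom (R := R) ha') hg
  rw [map_mul, map_pow, map_sub, map_one, substAlgHom_X] at h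
  simpa only [coe_substAlgHom] using h

end PowerSeries

theorem coeff_substInto (f g : ℚ⟦X⟧) (n : ℕ) :
    coeff n (substInto f g) = ∑ k ∈ Finset.range (n + 1), coeff k g * coeff n (f ^ k) := by
  rw [substInto, coeff_mk, Polynomial.aeval_eq_sum_range' (natDegree_trunc_lt g n), map_sum]
  refine Finset.sum_congr rfl fun k hk => ?_
  rw [coeff_smul, coeff_trunc, if_pos (Finset.mem_range.mp hk), smul_eq_mul]

theorem substInto_eq_subst {f : ℚ⟦X⟧} (hf : constantCoeff f = 0) (g : ℚ⟦X⟧) :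
    substInto f g = g.subst f := by
  ext n
  rw [coeff_substInto, coeff_subst' (HasSubst.of_constantCoeff_zero' hf)]
  refine (finsum_eq_sum_of_support_subset _ fun k hk => ?_).symm
  simp only [Function.mem_support, Finset.coe_range, Set.mem_Iio] at hk ⊢
  by_contra hlt
  exact hk (by rw [coeff_pow_eq_zero_of_lt hf (by omega), mul_zero])

/-- Let `Q(0) = 0` with `Q·(1−Q)³ = X` and `z := Q·(1−2Q)²·(1−Q)⁻³`. Then
`X·z = (Q − 2Q²)²`; moreover if `R(0) = 0` satisfies `R·(1−R)² = T`, then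
substituting `z` into `R` gives `Q·(1−Q)⁻¹`. -/
theorem subst_simple_triang_to_irreducible_triang
    (Q R : PowerSeries ℚ)
    (hQ0 : constantCoeff Q = 0) (hQ : Q * (1 - Q) ^ 3 = X)
    (hR0 : constantCoeff R = 0) (hR : R * (1 - R) ^ 2 = X) :
    letI z : PowerSeries ℚ := Q * (1 - 2 * Q) ^ 2 * ((1 - Q)⁻¹) ^ 3
    X * z = (Q - 2 * Q ^ 2) ^ 2 ∧ substInto z R = Q * (1 - Q)⁻¹ := by
  set z := Q * (1 - 2 * Q) ^ 2 * ((1 - Q)⁻¹) ^ 3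
  set u := (1 - Q)⁻¹
  have hu : (1 - Q) * u = 1 := PowerSeries.mul_inv_cancel _ (by simp [hQ0])
  have hz0 : constantCoeff z = 0 := by simp [z, hQ0]
  have hS : Q * u * (1 - Q * u) ^ 2 = z := by
    linear_combination (-(Q * u) * (1 - Q * u + (1 - 2 * Q) * u)) * hu
  refine ⟨?_, ?_⟩
  · rw [← hQ]
    linear_combination (Q ^ 2 * (1 - 2 * Q) ^ 2 * (((1 - Q) * u) ^ 2 + (1 - Q) * u + 1)) * hu
  · rw [substInto_eq_subst hz0]
    refine eq_of_mul_one_sub_sq_eq (constantCoeff_subst_eq_zero hz0 R hR0) (by simp [u, hQ0]) ?_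
    rw [subst_mul_one_sub_subst_sq hz0 hR, hS]
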